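/- Let $P_0 : [0,T] \to \mathbb{R}^{2n\times 2n}$ and $P_1 : [0,T] \to \mathbb{R}^{3n\times 3n}$ be symmetric-matrix-valued solutions of the NCE Riccati system for homogeneous minor players (equations (33) of the paper), with block decompositions $P_0 = \begin{pmatrix}\Phi_1^0 & \Phi_2^0\\ \Phi_2^{0T} & \Phi_3^0\end{pmatrix}$ and $P_1 = \begin{pmatrix}\Phi_1 & \Phi_a^T & \Phi_2\\ \Phi_a & \Phi_0 & \Phi_b\\ \Phi_2^T & \Phi_b^T & \Phi_3\end{pmatrix}$ into $n\times n$ blocks. Then the nine block functions $(\Phi_1^0, \Phi_2^0, \Phi_3^0, \Phi_0, \Phi_1, \Phi_2, \Phi_3, \Phi_a, \Phi_b)$ satisfy the coupled system of nine $n\times n$ matrix ODEs (37) with the corresponding terminal conditions $\Phi_1^0(T)=Q_{0f}$, $\Phi_2^0(T)=-Q_{0f}\Gamma_{0f}$, $\Phi_3^0(T)=\Gamma_{0f}^TQ_{0f}\Gamma_{0f}$, $\Phi_0(T)=\Gamma_{1f}^TQ_f\Gamma_{1f}$, $\Phi_1(T)=Q_f$, $\Phi_2(T)=-Q_f\Gamma_{2f}$,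 $\Phi_3(T)=\Gamma_{2f}^TQ_f\Gamma_{2f}$, $\Phi_a(T)=-\Gamma_{1f}^TQ_f$, $\Phi_b(T)=\Gamma_{1f}^TQ_f\Gamma_{2f}$. -/

import Mathlib

/-!
Both Riccati equations are read off blockwise. Since the input matrices `𝔹₀ = (B₀; 0)` and
`𝔹 = (B; 0; 0)` only act on the first block, multiplying out `PA + AᵀP - P𝔹R⁻¹𝔹ᵀP + Q` for a
block matrix `P = [[X, Y], [W, Z]]` gives each block of the right-hand side explicitly; for
`P₁` this is applied to the splitting `n ⊕ 2n`, and the `2n` blocks are split once more.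
Symmetry of `P₀`, `P₁`, `R⁻¹` and `R₀⁻¹` turns the transposed products that appear into the
form in which (37) is written. The terminal conditions are the blocks of the weights
`(I, -Γ)ᵀ Q (I, -Γ)`.
-/

open Set Matrix

namespace Hom

noncomputable section

variable {n n1 : ℕ}

/-- Blocks of `P₀ = [[Φ₁⁰, Φ₂⁰], [Φ₂⁰ᵀ, Φ₃⁰]]`. -/
def Φ10 (P : Matrix (Fin n ⊕ Fin n) (Fin n ⊕ Fin n) ℝ) : Matrix (Fin n) (Fin n) ℝ :=
  Matrix.of fun i j => P (Sum.inl i) (Sum.inl j)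

def Φ20 (P : Matrix (Fin n ⊕ Fin n) (Fin n ⊕ Fin n) ℝ) : Matrix (Fin n) (Fin n) ℝ :=
  Matrix.of fun i j => P (Sum.inl i) (Sum.inr j)

def Φ30 (P : Matrix (Fin n ⊕ Fin n) (Fin n ⊕ Fin n) ℝ) : Matrix (Fin n) (Fin n) ℝ :=
  Matrix.of fun i j => P (Sum.inr i) (Sum.inr j)

/-- Blocks of `P₁ = [[Φ₁, Φₐᵀ, Φ₂], [Φₐ, Φ₀, Φ_b], [Φ₂ᵀ, Φ_bᵀ, Φ₃]]`. -/
def Φ1 (P : Matrix (Fin n ⊕ (Fin n ⊕ Fin n)) (Fin n ⊕ (Fin n ⊕ Fin n)) ℝ) :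
    Matrix (Fin n) (Fin n) ℝ :=
  Matrix.of fun i j => P (Sum.inl i) (Sum.inl j)

def Φa (P : Matrix (Fin n ⊕ (Fin n ⊕ Fin n)) (Fin n ⊕ (Fin n ⊕ Fin n)) ℝ) :
    Matrix (Fin n) (Fin n) ℝ :=
  Matrix.of fun i j => P (Sum.inr (Sum.inl i)) (Sum.inl j)

def Φ2 (P : Matrix (Fin n ⊕ (Fin n ⊕ Fin n)) (Fin n ⊕ (Fin n ⊕ Fin n)) ℝ) :
    Matrix (Fin n) (Fin n) ℝ :=
  Matrix.of fun i j => P (Sum.inl i) (Sum.inr (Sum.inr j))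

def Φ0 (P : Matrix (Fin n ⊕ (Fin n ⊕ Fin n)) (Fin n ⊕ (Fin n ⊕ Fin n)) ℝ) :
    Matrix (Fin n) (Fin n) ℝ :=
  Matrix.of fun i j => P (Sum.inr (Sum.inl i)) (Sum.inr (Sum.inl j))

def Φb (P : Matrix (Fin n ⊕ (Fin n ⊕ Fin n)) (Fin n ⊕ (Fin n ⊕ Fin n)) ℝ) :
    Matrix (Fin n) (Fin n) ℝ :=
  Matrix.of fun i j => P (Sum.inr (Sum.inl i)) (Sum.inr (Sum.inr j))

def Φ3 (P : Matrix (Fin n ⊕ (Fin n ⊕ Fin n)) (Fin n ⊕ (Fin n ⊕ Fin n)) ℝ) :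
    Matrix (Fin n) (Fin n) ℝ :=
  Matrix.of fun i j => P (Sum.inr (Sum.inr i)) (Sum.inr (Sum.inr j))

/-- `𝔸₀ = [[A₀, F₀], [Ḡ, Ā]]` with `Ḡ = G - MΦₐᵀ`,
`Ā = A + F - M(Φ₁ + Φ₂)` expressed via the blocks of `P₁`. -/
def A0big (A0 F0 G A F M : Matrix (Fin n) (Fin n) ℝ)
    (P1 : Matrix (Fin n ⊕ (Fin n ⊕ Fin n)) (Fin n ⊕ (Fin n ⊕ Fin n)) ℝ) :
    Matrix (Fin n ⊕ Fin n) (Fin n ⊕ Fin n) ℝ :=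
  fromBlocks A0 F0 (G - M * (Φa P1)ᵀ) (A + F - M * (Φ1 P1 + Φ2 P1))

/-- `𝔸 = [[A, [G F]], [0, 𝔸₀ - 𝔹₀R₀⁻¹𝔹₀ᵀP₀]]`. -/
def Abig (A0 F0 G A F M : Matrix (Fin n) (Fin n) ℝ)
    (B0 : Matrix (Fin n) (Fin n1) ℝ) (R0 : Matrix (Fin n1) (Fin n1) ℝ)
    (P0 : Matrix (Fin n ⊕ Fin n) (Fin n ⊕ Fin n) ℝ)
    (P1 : Matrix (Fin n ⊕ (Fin n ⊕ Fin n)) (Fin n ⊕ (Fin n ⊕ Fin n)) ℝ) :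
    Matrix (Fin n ⊕ (Fin n ⊕ Fin n)) (Fin n ⊕ (Fin n ⊕ Fin n)) ℝ :=
  fromBlocks A (fromCols G F) 0
    (A0big A0 F0 G A F M P1 -
      fromRows B0 (0 : Matrix (Fin n) (Fin n1) ℝ) * R0⁻¹ *
        (fromRows B0 (0 : Matrix (Fin n) (Fin n1) ℝ))ᵀ * P0)

end

end Hom

open Hom

namespace Matrix

variable {α m₁ m₂ m₃ n₁ n₂ k : Type*}

/-- `Ṗ = riccatiRhs ρ A B R⁻¹ Q P` is the discounted Riccati equation
`ρP = Ṗ + PA + AᵀP - PBR⁻¹BᵀP + Q`. -/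
def riccatiRhs {m : Type*} [Fintype m] [Fintype k] [CommRing α] (ρ : α) (A : Matrix m m α)
    (B : Matrix m k α) (Rinv : Matrix k k α) (Q P : Matrix m m α) : Matrix m m α :=
  ρ • P - (P * A + Aᵀ * P - P * B * Rinv * Bᵀ * P + Q)

lemma fromBlocks_sub [Sub α] (a : Matrix m₁ n₁ α) (b : Matrix m₁ n₂ α)
    (c : Matrix m₂ n₁ α) (d : Matrix m₂ n₂ α) (a' b' c' d') :
    fromBlocks a b c d - fromBlocks a' b' c' d' =
      fromBlocks (a - a') (b - b') (c - c') (d - d') := by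
  ext (i | i) (j | j) <;> rfl

lemma fromCols_add [Add α] (a : Matrix m₁ n₁ α) (b : Matrix m₁ n₂ α) (a' b') :
    fromCols a b + fromCols a' b' = fromCols (a + a') (b + b') := by
  ext i (j | j) <;> rfl

lemma fromCols_sub [Sub α] (a : Matrix m₁ n₁ α) (b : Matrix m₁ n₂ α) (a' b') :
    fromCols a b - fromCols a' b' = fromCols (a - a') (b - b') := by
  ext i (j | j) <;> rfl

lemma fromRows_add [Add α] (a : Matrix m₁ n₁ α) (b : Matrix m₂ n₁ α) (a' b') :
    fromRows a b + fromRows a' b' = fromRows (a + a') (b + b') := by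
  ext (i | i) j <;> rfl

lemma fromRows_sub [Sub α] (a : Matrix m₁ n₁ α) (b : Matrix m₂ n₁ α) (a' b') :
    fromRows a b - fromRows a' b' = fromRows (a - a') (b - b') := by
  ext (i | i) j <;> rfl

lemma smul_fromCols {R : Type*} [SMul R α] (x : R) (a : Matrix m₁ n₁ α) (b : Matrix m₁ n₂ α) :
    x • fromCols a b = fromCols (x • a) (x • b) := by
  ext i (j | j) <;> rfl

lemma smul_fromRows {R : Type*} [SMul R α] (x : R) (a : Matrix m₁ n₁ α) (b : Matrix m₂ n₁ α) :
    x • fromRows a b = fromRows (x • a) (x • b) := by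
  ext (i | i) j <;> rfl

lemma IsSymm.eq_fromBlocks {P : Matrix (m₁ ⊕ m₂) (m₁ ⊕ m₂) α} (hP : P.IsSymm) :
    P = Matrix.fromBlocks P.toBlocks₁₁ P.toBlocks₁₂ P.toBlocks₁₂ᵀ P.toBlocks₂₂ := by
  ext (i | i) (j | j)
  exacts [rfl, rfl, (hP.apply _ _).symm, rfl]

lemma IsSymm.exists_eq_fromBlocks_fromCols
    {P : Matrix (m₁ ⊕ (m₂ ⊕ m₃)) (m₁ ⊕ (m₂ ⊕ m₃)) α} (hP : P.IsSymm) :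
    ∃ X Ya Y2 Z0 Zb Z3, P = Matrix.fromBlocks X (fromCols Yaᵀ Y2) (fromRows Ya Y2ᵀ)
      (Matrix.fromBlocks Z0 Zb Zbᵀ Z3) := by
  refine ⟨P.toBlocks₁₁, P.toBlocks₂₁.toRows₁, P.toBlocks₁₂.toCols₂, P.toBlocks₂₂.toBlocks₁₁,
    P.toBlocks₂₂.toBlocks₁₂, P.toBlocks₂₂.toBlocks₂₂, ?_⟩
  ext (i | i | i) (j | j | j)
  all_goals first | rfl | exact (hP.apply _ _).symm

lemma fromCols_one_neg_transpose_mul_mul [Fintype m₁] [DecidableEq m₁] [CommRing α]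
    (Γ : Matrix m₁ n₁ α) (Q : Matrix m₁ m₁ α) :
    (fromCols 1 (-Γ))ᵀ * Q * fromCols 1 (-Γ) =
      fromBlocks Q (-(Q * Γ)) (-(Γᵀ * Q)) (Γᵀ * Q * Γ) := by
  simp [transpose_fromCols, Matrix.neg_mul, Matrix.mul_neg]

lemma fromCols_one_fromCols_neg_transpose_mul_mul [Fintype m₁] [DecidableEq m₁] [CommRing α]
    (Γ₁ : Matrix m₁ n₁ α) (Γ₂ : Matrix m₁ n₂ α) (Q : Matrix m₁ m₁ α) :
    (fromCols 1 (fromCols (-Γ₁) (-Γ₂)))ᵀ * Q * fromCols 1 (fromCols (-Γ₁) (-Γ₂)) =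
      Matrix.fromBlocks Q (fromCols (-(Q * Γ₁)) (-(Q * Γ₂))) (fromRows (-(Γ₁ᵀ * Q)) (-(Γ₂ᵀ * Q)))
        (Matrix.fromBlocks (Γ₁ᵀ * Q * Γ₁) (Γ₁ᵀ * Q * Γ₂) (Γ₂ᵀ * Q * Γ₁) (Γ₂ᵀ * Q * Γ₂)) := by
  rw [← fromCols_neg, fromCols_one_neg_transpose_mul_mul]
  simp only [transpose_fromCols, mul_fromCols, fromRows_mul, fromCols_fromRows_eq_fromBlocks,
    fromCols_neg, fromRows_neg]

theorem riccatiRhs_fromBlocks [Fintype m₁] [Fintype m₂] [Fintype k] [CommRing α] (ρ : α)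
    (a : Matrix m₁ m₁ α) (b : Matrix m₁ m₂ α) (c : Matrix m₂ m₁ α) (d : Matrix m₂ m₂ α)
    (B₁ : Matrix m₁ k α) (Rinv : Matrix k k α)
    (q₁₁ : Matrix m₁ m₁ α) (q₁₂ : Matrix m₁ m₂ α) (q₂₁ : Matrix m₂ m₁ α) (q₂₂ : Matrix m₂ m₂ α)
    (X : Matrix m₁ m₁ α) (Y : Matrix m₁ m₂ α) (W : Matrix m₂ m₁ α) (Z : Matrix m₂ m₂ α) :
    riccatiRhs ρ (fromBlocks a b c d) (fromRows B₁ 0) Rinv (fromBlocks q₁₁ q₁₂ q₂₁ q₂₂)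
        (fromBlocks X Y W Z) =
      fromBlocks
        (ρ • X - (X * a + Y * c + (aᵀ * X + cᵀ * W) - X * B₁ * Rinv * B₁ᵀ * X + q₁₁))
        (ρ • Y - (X * b + Y * d + (aᵀ * Y + cᵀ * Z) - X * B₁ * Rinv * B₁ᵀ * Y + q₁₂))
        (ρ • W - (W * a + Z * c + (bᵀ * X + dᵀ * W) - W * B₁ * Rinv * B₁ᵀ * X + q₂₁))
        (ρ • Z - (W * b + Z * d + (bᵀ * Y + dᵀ * Z) - W * B₁ * Rinv * B₁ᵀ * Y + q₂₂)) := by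
  simp only [riccatiRhs, fromBlocks_transpose, transpose_fromRows, transpose_zero,
    fromBlocks_multiply, fromBlocks_mul_fromRows, fromRows_mul, mul_fromCols,
    fromCols_mul_fromBlocks, fromCols_fromRows_eq_fromBlocks, Matrix.mul_zero, Matrix.zero_mul,
    add_zero, fromBlocks_add, fromBlocks_sub, fromBlocks_smul]

end Matrix

namespace Hom

variable {n n1 : ℕ}

section BlockEntries

variable (a b c d q r s w x y u v : Matrix (Fin n) (Fin n) ℝ)
  (b' : Matrix (Fin n) (Fin n ⊕ Fin n) ℝ) (c' : Matrix (Fin n ⊕ Fin n) (Fin n) ℝ)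
  (d' : Matrix (Fin n ⊕ Fin n) (Fin n ⊕ Fin n) ℝ)

@[simp] lemma Φ10_fromBlocks : Φ10 (fromBlocks a b c d) = a := rfl
@[simp] lemma Φ20_fromBlocks : Φ20 (fromBlocks a b c d) = b := rfl
@[simp] lemma Φ30_fromBlocks : Φ30 (fromBlocks a b c d) = d := rfl
@[simp] lemma Φ1_fromBlocks : Φ1 (fromBlocks a b' c' d') = a := rfl
@[simp] lemma Φ2_fromBlocks : Φ2 (fromBlocks a (fromCols x y) c' d') = y := rfl
@[simp] lemma Φa_fromBlocks : Φa (fromBlocks a b' (fromRows u v) d') = u := rfl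
@[simp] lemma Φ0_fromBlocks : Φ0 (fromBlocks a b' c' (fromBlocks q r s w)) = q := rfl
@[simp] lemma Φb_fromBlocks : Φb (fromBlocks a b' c' (fromBlocks q r s w)) = r := rfl
@[simp] lemma Φ3_fromBlocks : Φ3 (fromBlocks a b' c' (fromBlocks q r s w)) = w := rfl

end BlockEntries

theorem riccatiRhs_A0big_blocks (ρ : ℝ) (A0 A F0 F G Γ0 Q0 M : Matrix (Fin n) (Fin n) ℝ)
    (hM : Mᵀ = M) (B0 : Matrix (Fin n) (Fin n1) ℝ) (R0inv : Matrix (Fin n1) (Fin n1) ℝ)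
    (P0 : Matrix (Fin n ⊕ Fin n) (Fin n ⊕ Fin n) ℝ) (hP0 : P0.IsSymm)
    (P1 : Matrix (Fin n ⊕ (Fin n ⊕ Fin n)) (Fin n ⊕ (Fin n ⊕ Fin n)) ℝ) :
    let M0 := B0 * R0inv * B0ᵀ
    let rhs := riccatiRhs ρ (A0big A0 F0 G A F M P1) (fromRows B0 0) R0inv
      ((fromCols 1 (-Γ0))ᵀ * Q0 * fromCols 1 (-Γ0)) P0
    Φ10 rhs = ρ • Φ10 P0 - (Φ10 P0 * A0 + A0ᵀ * Φ10 P0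
          + Φ20 P0 * (G - M * (Φa P1)ᵀ)
          + (Gᵀ - Φa P1 * M) * (Φ20 P0)ᵀ
          - Φ10 P0 * M0 * Φ10 P0 + Q0) ∧
    Φ20 rhs = ρ • Φ20 P0 - (Φ10 P0 * F0
          + Φ20 P0 * (A + F - M * (Φ1 P1 + Φ2 P1))
          + A0ᵀ * Φ20 P0
          - (Φa P1 * M - Gᵀ) * Φ30 P0
          - Φ10 P0 * M0 * Φ20 P0 - Q0 * Γ0) ∧
    Φ30 rhs = ρ • Φ30 P0 - ((Φ20 P0)ᵀ * F0 + F0ᵀ * Φ20 P0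
          + Φ30 P0 * (A + F - M * (Φ1 P1 + Φ2 P1))
          + (A + F - M * (Φ1 P1 + Φ2 P1))ᵀ * Φ30 P0
          - (Φ20 P0)ᵀ * M0 * Φ20 P0 + Γ0ᵀ * Q0 * Γ0) := by
  obtain ⟨X, Y, Z, rfl⟩ : ∃ X Y Z, P0 = fromBlocks X Y Yᵀ Z := ⟨_, _, _, hP0.eq_fromBlocks⟩
  simp only [A0big, fromCols_one_neg_transpose_mul_mul, riccatiRhs_fromBlocks,
    Φ10_fromBlocks, Φ20_fromBlocks, Φ30_fromBlocks]
  refine ⟨?_, ?_, ?_⟩ <;>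
  · rw [sub_right_inj]
    simp only [transpose_sub, transpose_add, transpose_mul, transpose_transpose, hM,
      Matrix.mul_assoc, Matrix.mul_add, Matrix.add_mul, Matrix.mul_sub, Matrix.sub_mul]
    abel

theorem riccatiRhs_Abig_blocks (ρ : ℝ) (A0 A F0 F G Γ1 Γ2 Q : Matrix (Fin n) (Fin n) ℝ)
    (B0 B : Matrix (Fin n) (Fin n1) ℝ) (R0 Rinv : Matrix (Fin n1) (Fin n1) ℝ)
    (hRinv : Rinvᵀ = Rinv) (hR0inv : (R0⁻¹)ᵀ = R0⁻¹)
    (P0 : Matrix (Fin n ⊕ Fin n) (Fin n ⊕ Fin n) ℝ) (hP0 : P0.IsSymm)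
    (P1 : Matrix (Fin n ⊕ (Fin n ⊕ Fin n)) (Fin n ⊕ (Fin n ⊕ Fin n)) ℝ) (hP1 : P1.IsSymm) :
    let M := B * Rinv * Bᵀ
    let M0 := B0 * R0⁻¹ * B0ᵀ
    let rhs := riccatiRhs ρ (Abig A0 F0 G A F M B0 R0 P0 P1) (fromRows B 0) Rinv
      ((fromCols 1 (fromCols (-Γ1) (-Γ2)))ᵀ * Q * fromCols 1 (fromCols (-Γ1) (-Γ2))) P1
    Φ0 rhs = ρ • Φ0 P1 - (Φa P1 * G
          + Φ0 P1 * (A0 - M0 * Φ10 P0)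
          + Φb P1 * (G - M * (Φa P1)ᵀ)
          + Gᵀ * (Φa P1)ᵀ
          + (A0ᵀ - Φ10 P0 * M0) * Φ0 P1
          + (Gᵀ - Φa P1 * M) * (Φb P1)ᵀ
          - Φa P1 * M * (Φa P1)ᵀ + Γ1ᵀ * Q * Γ1) ∧
    Φ1 rhs = ρ • Φ1 P1 - (Φ1 P1 * A + Aᵀ * Φ1 P1
          - Φ1 P1 * M * Φ1 P1 + Q) ∧
    Φ2 rhs = ρ • Φ2 P1 - (Φ1 P1 * F
          + (Φa P1)ᵀ * (F0 - M0 * Φ20 P0)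
          + Φ2 P1 * (A + F - M * (Φ1 P1 + Φ2 P1))
          + Aᵀ * Φ2 P1
          - Φ1 P1 * M * Φ2 P1 - Q * Γ2) ∧
    Φ3 rhs = ρ • Φ3 P1 - ((Φ2 P1)ᵀ * F + Fᵀ * Φ2 P1
          + (Φb P1)ᵀ * (F0 - M0 * Φ20 P0)
          + (F0ᵀ - (Φ20 P0)ᵀ * M0) * Φb P1
          + Φ3 P1 * (A + F - M * (Φ1 P1 + Φ2 P1))
          + (A + F - M * (Φ1 P1 + Φ2 P1))ᵀ * Φ3 P1
          - (Φ2 P1)ᵀ * M * Φ2 P1 + Γ2ᵀ * Q * Γ2) ∧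
    Φa rhs = ρ • Φa P1 - (Φa P1 * A + Gᵀ * Φ1 P1
          + (A0ᵀ - Φ10 P0 * M0) * Φa P1
          + (Gᵀ - Φa P1 * M) * (Φ2 P1)ᵀ
          - Φa P1 * M * Φ1 P1 - Γ1ᵀ * Q) ∧
    Φb rhs = ρ • Φb P1 - (Φa P1 * F
          + Φ0 P1 * (F0 - M0 * Φ20 P0)
          + Φb P1 * (A + F - M * (Φ1 P1 + Φ2 P1))
          + Gᵀ * Φ2 P1
          + (A0ᵀ - Φ10 P0 * M0) * Φb P1
          + (Gᵀ - Φa P1 * M) * Φ3 P1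
          - Φa P1 * M * Φ2 P1 + Γ1ᵀ * Q * Γ2) := by
  obtain ⟨X, Y, Z, rfl⟩ : ∃ X Y Z, P0 = fromBlocks X Y Yᵀ Z := ⟨_, _, _, hP0.eq_fromBlocks⟩
  obtain ⟨X1, Ya, Y2, Z0, Zb, Z3, rfl⟩ := hP1.exists_eq_fromBlocks_fromCols
  have hX : Xᵀ = X := congrArg toBlocks₁₁ hP0
  rw [fromCols_one_fromCols_neg_transpose_mul_mul]
  simp only [Abig, A0big, Φ10_fromBlocks, Φ20_fromBlocks, Φ1_fromBlocks, Φ2_fromBlocks,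
    Φa_fromBlocks, Φ0_fromBlocks, Φb_fromBlocks, Φ3_fromBlocks, fromRows_mul, transpose_fromRows, transpose_zero, mul_fromCols,
    fromCols_mul_fromBlocks, fromCols_fromRows_eq_fromBlocks, Matrix.mul_zero, Matrix.zero_mul,
    add_zero, fromBlocks_sub, sub_zero]
  rw [riccatiRhs_fromBlocks]
  simp only [fromBlocks_transpose, transpose_fromCols, fromBlocks_multiply,
    fromBlocks_mul_fromRows, fromRows_mul, mul_fromCols, fromCols_mul_fromBlocks, transpose_zero, Matrix.mul_zero, Matrix.zero_mul, add_zero,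
    fromCols_add, fromCols_sub, fromRows_add, fromRows_sub, smul_fromCols, smul_fromRows,
    fromBlocks_add, fromBlocks_sub, fromBlocks_smul, fromCols_fromRows_eq_fromBlocks,
    Φ1_fromBlocks, Φ2_fromBlocks, Φa_fromBlocks, Φ0_fromBlocks, Φb_fromBlocks, Φ3_fromBlocks]
  refine ⟨?_, ?_, ?_, ?_, ?_, ?_⟩ <;>
  · rw [sub_right_inj]
    simp only [transpose_sub, transpose_add, transpose_mul, transpose_transpose, hRinv, hR0inv,
      hX, Matrix.mul_assoc, Matrix.mul_add, Matrix.add_mul, Matrix.mul_sub, Matrix.sub_mul] <;>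
    abel

end Hom

theorem stmt_12_general {n n1 : ℕ} (T ρ : ℝ)
    (A0 A F0 F G : Matrix (Fin n) (Fin n) ℝ)
    (B0 B : Matrix (Fin n) (Fin n1) ℝ)
    (R0 R : Matrix (Fin n1) (Fin n1) ℝ) (hR0 : R0.PosDef) (hR : R.PosDef)
    (Q0 Q Q0f Qf : Matrix (Fin n) (Fin n) ℝ)
    (Γ0 Γ1 Γ2 Γ0f Γ1f Γ2f : Matrix (Fin n) (Fin n) ℝ)
    (P0 : ℝ → Matrix (Fin n ⊕ Fin n) (Fin n ⊕ Fin n) ℝ)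
    (P1 : ℝ → Matrix (Fin n ⊕ (Fin n ⊕ Fin n)) (Fin n ⊕ (Fin n ⊕ Fin n)) ℝ)
    (hP0symm : ∀ t, (P0 t).IsHermitian) (hP1symm : ∀ t, (P1 t).IsHermitian)
    -- the NCE Riccati system (33), with `M = BR⁻¹Bᵀ`, `M₀ = B₀R₀⁻¹B₀ᵀ`
    (hP0 : ∀ t ∈ Icc (0 : ℝ) T, ∀ a b, HasDerivAt (fun s => P0 s a b)
      ((ρ • P0 t - (P0 t * A0big A0 F0 G A F (B * R⁻¹ * Bᵀ) (P1 t)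
        + (A0big A0 F0 G A F (B * R⁻¹ * Bᵀ) (P1 t))ᵀ * P0 t
        - P0 t * fromRows B0 (0 : Matrix (Fin n) (Fin n1) ℝ) * R0⁻¹ *
            (fromRows B0 (0 : Matrix (Fin n) (Fin n1) ℝ))ᵀ * P0 t
        + (fromCols 1 (-Γ0))ᵀ * Q0 * fromCols 1 (-Γ0)
        : Matrix (Fin n ⊕ Fin n) (Fin n ⊕ Fin n) ℝ)) a b) t)
    (hP0T : P0 T = (fromCols 1 (-Γ0f))ᵀ * Q0f * fromCols 1 (-Γ0f))
    (hP1 : ∀ t ∈ Icc (0 : ℝ) T, ∀ a b, HasDerivAt (fun s => P1 s a b)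
      ((ρ • P1 t - (P1 t * Abig A0 F0 G A F (B * R⁻¹ * Bᵀ) B0 R0 (P0 t) (P1 t)
        + (Abig A0 F0 G A F (B * R⁻¹ * Bᵀ) B0 R0 (P0 t) (P1 t))ᵀ * P1 t
        - P1 t * fromRows B (0 : Matrix (Fin n ⊕ Fin n) (Fin n1) ℝ) * R⁻¹ *
            (fromRows B (0 : Matrix (Fin n ⊕ Fin n) (Fin n1) ℝ))ᵀ * P1 t
        + (fromCols 1 (fromCols (-Γ1) (-Γ2)))ᵀ * Q *
            fromCols 1 (fromCols (-Γ1) (-Γ2))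
        : Matrix (Fin n ⊕ (Fin n ⊕ Fin n)) (Fin n ⊕ (Fin n ⊕ Fin n)) ℝ)) a b) t)
    (hP1T : P1 T = (fromCols 1 (fromCols (-Γ1f) (-Γ2f)))ᵀ * Qf *
      fromCols 1 (fromCols (-Γ1f) (-Γ2f))) :
    -- the nine-block system (37)
    (let M : Matrix (Fin n) (Fin n) ℝ := B * R⁻¹ * Bᵀ
     let M0 : Matrix (Fin n) (Fin n) ℝ := B0 * R0⁻¹ * B0ᵀ
     (∀ t ∈ Icc (0 : ℝ) T, ∀ i j,
      -- Φ̇₁⁰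
      (HasDerivAt (fun s => Φ10 (P0 s) i j)
        ((ρ • Φ10 (P0 t) - (Φ10 (P0 t) * A0 + A0ᵀ * Φ10 (P0 t)
          + Φ20 (P0 t) * (G - M * (Φa (P1 t))ᵀ)
          + (Gᵀ - Φa (P1 t) * M) * (Φ20 (P0 t))ᵀ
          - Φ10 (P0 t) * M0 * Φ10 (P0 t) + Q0)) i j) t) ∧
      -- Φ̇₂⁰
      (HasDerivAt (fun s => Φ20 (P0 s) i j)
        ((ρ • Φ20 (P0 t) - (Φ10 (P0 t) * F0
          + Φ20 (P0 t) * (A + F - M * (Φ1 (P1 t) + Φ2 (P1 t)))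
          + A0ᵀ * Φ20 (P0 t)
          - (Φa (P1 t) * M - Gᵀ) * Φ30 (P0 t)
          - Φ10 (P0 t) * M0 * Φ20 (P0 t) - Q0 * Γ0)) i j) t) ∧
      -- Φ̇₃⁰
      (HasDerivAt (fun s => Φ30 (P0 s) i j)
        ((ρ • Φ30 (P0 t) - ((Φ20 (P0 t))ᵀ * F0 + F0ᵀ * Φ20 (P0 t)
          + Φ30 (P0 t) * (A + F - M * (Φ1 (P1 t) + Φ2 (P1 t)))
          + (A + F - M * (Φ1 (P1 t) + Φ2 (P1 t)))ᵀ * Φ30 (P0 t)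
          - (Φ20 (P0 t))ᵀ * M0 * Φ20 (P0 t) + Γ0ᵀ * Q0 * Γ0)) i j) t) ∧
      -- Φ̇₀
      (HasDerivAt (fun s => Φ0 (P1 s) i j)
        ((ρ • Φ0 (P1 t) - (Φa (P1 t) * G
          + Φ0 (P1 t) * (A0 - M0 * Φ10 (P0 t))
          + Φb (P1 t) * (G - M * (Φa (P1 t))ᵀ)
          + Gᵀ * (Φa (P1 t))ᵀ
          + (A0ᵀ - Φ10 (P0 t) * M0) * Φ0 (P1 t)
          + (Gᵀ - Φa (P1 t) * M) * (Φb (P1 t))ᵀ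
          - Φa (P1 t) * M * (Φa (P1 t))ᵀ + Γ1ᵀ * Q * Γ1)) i j) t) ∧
      -- Φ̇₁
      (HasDerivAt (fun s => Φ1 (P1 s) i j)
        ((ρ • Φ1 (P1 t) - (Φ1 (P1 t) * A + Aᵀ * Φ1 (P1 t)
          - Φ1 (P1 t) * M * Φ1 (P1 t) + Q)) i j) t) ∧
      -- Φ̇₂
      (HasDerivAt (fun s => Φ2 (P1 s) i j)
        ((ρ • Φ2 (P1 t) - (Φ1 (P1 t) * F
          + (Φa (P1 t))ᵀ * (F0 - M0 * Φ20 (P0 t))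
          + Φ2 (P1 t) * (A + F - M * (Φ1 (P1 t) + Φ2 (P1 t)))
          + Aᵀ * Φ2 (P1 t)
          - Φ1 (P1 t) * M * Φ2 (P1 t) - Q * Γ2)) i j) t) ∧
      -- Φ̇₃
      (HasDerivAt (fun s => Φ3 (P1 s) i j)
        ((ρ • Φ3 (P1 t) - ((Φ2 (P1 t))ᵀ * F + Fᵀ * Φ2 (P1 t)
          + (Φb (P1 t))ᵀ * (F0 - M0 * Φ20 (P0 t))
          + (F0ᵀ - (Φ20 (P0 t))ᵀ * M0) * Φb (P1 t)
          + Φ3 (P1 t) * (A + F - M * (Φ1 (P1 t) + Φ2 (P1 t)))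
          + (A + F - M * (Φ1 (P1 t) + Φ2 (P1 t)))ᵀ * Φ3 (P1 t)
          - (Φ2 (P1 t))ᵀ * M * Φ2 (P1 t) + Γ2ᵀ * Q * Γ2)) i j) t) ∧
      -- Φ̇ₐ
      (HasDerivAt (fun s => Φa (P1 s) i j)
        ((ρ • Φa (P1 t) - (Φa (P1 t) * A + Gᵀ * Φ1 (P1 t)
          + (A0ᵀ - Φ10 (P0 t) * M0) * Φa (P1 t)
          + (Gᵀ - Φa (P1 t) * M) * (Φ2 (P1 t))ᵀ
          - Φa (P1 t) * M * Φ1 (P1 t) - Γ1ᵀ * Q)) i j) t) ∧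
      -- Φ̇_b
      (HasDerivAt (fun s => Φb (P1 s) i j)
        ((ρ • Φb (P1 t) - (Φa (P1 t) * F
          + Φ0 (P1 t) * (F0 - M0 * Φ20 (P0 t))
          + Φb (P1 t) * (A + F - M * (Φ1 (P1 t) + Φ2 (P1 t)))
          + Gᵀ * Φ2 (P1 t)
          + (A0ᵀ - Φ10 (P0 t) * M0) * Φb (P1 t)
          + (Gᵀ - Φa (P1 t) * M) * Φ3 (P1 t)
          - Φa (P1 t) * M * Φ2 (P1 t) + Γ1ᵀ * Q * Γ2)) i j) t)) ∧
     Φ10 (P0 T) = Q0f ∧ Φ20 (P0 T) = -(Q0f * Γ0f) ∧ Φ30 (P0 T) = Γ0fᵀ * Q0f * Γ0f ∧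
     Φ0 (P1 T) = Γ1fᵀ * Qf * Γ1f ∧ Φ1 (P1 T) = Qf ∧ Φ2 (P1 T) = -(Qf * Γ2f) ∧
     Φ3 (P1 T) = Γ2fᵀ * Qf * Γ2f ∧ Φa (P1 T) = -(Γ1fᵀ * Qf) ∧
     Φb (P1 T) = Γ1fᵀ * Qf * Γ2f) := by
  have hRinv : (R⁻¹)ᵀ = R⁻¹ := isHermitian_iff_isSymm.mp hR.isHermitian.inv
  have hR0inv : (R0⁻¹)ᵀ = R0⁻¹ := isHermitian_iff_isSymm.mp hR0.isHermitian.inv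
  have hM : (B * R⁻¹ * Bᵀ)ᵀ = B * R⁻¹ * Bᵀ := by
    rw [transpose_mul, transpose_mul, transpose_transpose, hRinv, Matrix.mul_assoc]
  refine ⟨fun t ht i j => ?_, ?_⟩
  · have hsymm0 := isHermitian_iff_isSymm.mp (hP0symm t)
    obtain ⟨e10, e20, e30⟩ :=
      riccatiRhs_A0big_blocks ρ A0 A F0 F G Γ0 Q0 _ hM B0 R0⁻¹ (P0 t) hsymm0 (P1 t)
    obtain ⟨e0, e1, e2, e3, ea, eb⟩ := riccatiRhs_Abig_blocks ρ A0 A F0 F G Γ1 Γ2 Q B0 B R0 R⁻¹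
      hRinv hR0inv (P0 t) hsymm0 (P1 t) (isHermitian_iff_isSymm.mp (hP1symm t))
    have h0 := hP0 t ht
    have h1 := hP1 t ht
    exact ⟨(h0 _ _).congr_deriv (congrFun₂ e10 i j), (h0 _ _).congr_deriv (congrFun₂ e20 i j),
      (h0 _ _).congr_deriv (congrFun₂ e30 i j), (h1 _ _).congr_deriv (congrFun₂ e0 i j),
      (h1 _ _).congr_deriv (congrFun₂ e1 i j), (h1 _ _).congr_deriv (congrFun₂ e2 i j),
      (h1 _ _).congr_deriv (congrFun₂ e3 i j), (h1 _ _).congr_deriv (congrFun₂ ea i j),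
      (h1 _ _).congr_deriv (congrFun₂ eb i j)⟩
  · rw [hP0T, hP1T, fromCols_one_neg_transpose_mul_mul,
      fromCols_one_fromCols_neg_transpose_mul_mul]
    exact ⟨rfl, rfl, rfl, rfl, rfl, rfl, rfl, rfl, rfl⟩

/-- For homogeneous minor players, writing the `2n×2n` and `3n×3n` NCE Riccati
equations (33) blockwise yields exactly the nine-equation system (37) with the
corresponding terminal conditions. -/
theorem stmt_12 {n n1 : ℕ} (hn : 1 ≤ n) (hn1 : 1 ≤ n1) (T ρ : ℝ) (hT : 0 < T) (hρ : 0 ≤ ρ)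
    (A0 A F0 F G : Matrix (Fin n) (Fin n) ℝ)
    (B0 B : Matrix (Fin n) (Fin n1) ℝ)
    (R0 R : Matrix (Fin n1) (Fin n1) ℝ) (hR0 : R0.PosDef) (hR : R.PosDef)
    (Q0 Q Q0f Qf : Matrix (Fin n) (Fin n) ℝ)
    (hQ0 : Q0.PosSemidef) (hQ : Q.PosSemidef) (hQ0f : Q0f.PosSemidef) (hQf : Qf.PosSemidef)
    (Γ0 Γ1 Γ2 Γ0f Γ1f Γ2f : Matrix (Fin n) (Fin n) ℝ)
    (P0 : ℝ → Matrix (Fin n ⊕ Fin n) (Fin n ⊕ Fin n) ℝ)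
    (P1 : ℝ → Matrix (Fin n ⊕ (Fin n ⊕ Fin n)) (Fin n ⊕ (Fin n ⊕ Fin n)) ℝ)
    (hP0symm : ∀ t, (P0 t).IsHermitian) (hP1symm : ∀ t, (P1 t).IsHermitian)
    -- the NCE Riccati system (33), with `M = BR⁻¹Bᵀ`, `M₀ = B₀R₀⁻¹B₀ᵀ`
    (hP0 : ∀ t ∈ Icc (0 : ℝ) T, ∀ a b, HasDerivAt (fun s => P0 s a b)
      ((ρ • P0 t - (P0 t * A0big A0 F0 G A F (B * R⁻¹ * Bᵀ) (P1 t)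
        + (A0big A0 F0 G A F (B * R⁻¹ * Bᵀ) (P1 t))ᵀ * P0 t
        - P0 t * fromRows B0 (0 : Matrix (Fin n) (Fin n1) ℝ) * R0⁻¹ *
            (fromRows B0 (0 : Matrix (Fin n) (Fin n1) ℝ))ᵀ * P0 t
        + (fromCols 1 (-Γ0))ᵀ * Q0 * fromCols 1 (-Γ0)
        : Matrix (Fin n ⊕ Fin n) (Fin n ⊕ Fin n) ℝ)) a b) t)
    (hP0T : P0 T = (fromCols 1 (-Γ0f))ᵀ * Q0f * fromCols 1 (-Γ0f))
    (hP1 : ∀ t ∈ Icc (0 : ℝ) T, ∀ a b, HasDerivAt (fun s => P1 s a b)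
      ((ρ • P1 t - (P1 t * Abig A0 F0 G A F (B * R⁻¹ * Bᵀ) B0 R0 (P0 t) (P1 t)
        + (Abig A0 F0 G A F (B * R⁻¹ * Bᵀ) B0 R0 (P0 t) (P1 t))ᵀ * P1 t
        - P1 t * fromRows B (0 : Matrix (Fin n ⊕ Fin n) (Fin n1) ℝ) * R⁻¹ *
            (fromRows B (0 : Matrix (Fin n ⊕ Fin n) (Fin n1) ℝ))ᵀ * P1 t
        + (fromCols 1 (fromCols (-Γ1) (-Γ2)))ᵀ * Q *
            fromCols 1 (fromCols (-Γ1) (-Γ2))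
        : Matrix (Fin n ⊕ (Fin n ⊕ Fin n)) (Fin n ⊕ (Fin n ⊕ Fin n)) ℝ)) a b) t)
    (hP1T : P1 T = (fromCols 1 (fromCols (-Γ1f) (-Γ2f)))ᵀ * Qf *
      fromCols 1 (fromCols (-Γ1f) (-Γ2f))) :
    -- the nine-block system (37)
    (let M : Matrix (Fin n) (Fin n) ℝ := B * R⁻¹ * Bᵀ
     let M0 : Matrix (Fin n) (Fin n) ℝ := B0 * R0⁻¹ * B0ᵀ
     (∀ t ∈ Icc (0 : ℝ) T, ∀ i j,
      -- Φ̇₁⁰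
      (HasDerivAt (fun s => Φ10 (P0 s) i j)
        ((ρ • Φ10 (P0 t) - (Φ10 (P0 t) * A0 + A0ᵀ * Φ10 (P0 t)
          + Φ20 (P0 t) * (G - M * (Φa (P1 t))ᵀ)
          + (Gᵀ - Φa (P1 t) * M) * (Φ20 (P0 t))ᵀ
          - Φ10 (P0 t) * M0 * Φ10 (P0 t) + Q0)) i j) t) ∧
      -- Φ̇₂⁰
      (HasDerivAt (fun s => Φ20 (P0 s) i j)
        ((ρ • Φ20 (P0 t) - (Φ10 (P0 t) * F0
          + Φ20 (P0 t) * (A + F - M * (Φ1 (P1 t) + Φ2 (P1 t)))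
          + A0ᵀ * Φ20 (P0 t)
          - (Φa (P1 t) * M - Gᵀ) * Φ30 (P0 t)
          - Φ10 (P0 t) * M0 * Φ20 (P0 t) - Q0 * Γ0)) i j) t) ∧
      -- Φ̇₃⁰
      (HasDerivAt (fun s => Φ30 (P0 s) i j)
        ((ρ • Φ30 (P0 t) - ((Φ20 (P0 t))ᵀ * F0 + F0ᵀ * Φ20 (P0 t)
          + Φ30 (P0 t) * (A + F - M * (Φ1 (P1 t) + Φ2 (P1 t)))
          + (A + F - M * (Φ1 (P1 t) + Φ2 (P1 t)))ᵀ * Φ30 (P0 t)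
          - (Φ20 (P0 t))ᵀ * M0 * Φ20 (P0 t) + Γ0ᵀ * Q0 * Γ0)) i j) t) ∧
      -- Φ̇₀
      (HasDerivAt (fun s => Φ0 (P1 s) i j)
        ((ρ • Φ0 (P1 t) - (Φa (P1 t) * G
          + Φ0 (P1 t) * (A0 - M0 * Φ10 (P0 t))
          + Φb (P1 t) * (G - M * (Φa (P1 t))ᵀ)
          + Gᵀ * (Φa (P1 t))ᵀ
          + (A0ᵀ - Φ10 (P0 t) * M0) * Φ0 (P1 t)
          + (Gᵀ - Φa (P1 t) * M) * (Φb (P1 t))ᵀ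
          - Φa (P1 t) * M * (Φa (P1 t))ᵀ + Γ1ᵀ * Q * Γ1)) i j) t) ∧
      -- Φ̇₁
      (HasDerivAt (fun s => Φ1 (P1 s) i j)
        ((ρ • Φ1 (P1 t) - (Φ1 (P1 t) * A + Aᵀ * Φ1 (P1 t)
          - Φ1 (P1 t) * M * Φ1 (P1 t) + Q)) i j) t) ∧
      -- Φ̇₂
      (HasDerivAt (fun s => Φ2 (P1 s) i j)
        ((ρ • Φ2 (P1 t) - (Φ1 (P1 t) * F
          + (Φa (P1 t))ᵀ * (F0 - M0 * Φ20 (P0 t))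
          + Φ2 (P1 t) * (A + F - M * (Φ1 (P1 t) + Φ2 (P1 t)))
          + Aᵀ * Φ2 (P1 t)
          - Φ1 (P1 t) * M * Φ2 (P1 t) - Q * Γ2)) i j) t) ∧
      -- Φ̇₃
      (HasDerivAt (fun s => Φ3 (P1 s) i j)
        ((ρ • Φ3 (P1 t) - ((Φ2 (P1 t))ᵀ * F + Fᵀ * Φ2 (P1 t)
          + (Φb (P1 t))ᵀ * (F0 - M0 * Φ20 (P0 t))
          + (F0ᵀ - (Φ20 (P0 t))ᵀ * M0) * Φb (P1 t)
          + Φ3 (P1 t) * (A + F - M * (Φ1 (P1 t) + Φ2 (P1 t)))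
          + (A + F - M * (Φ1 (P1 t) + Φ2 (P1 t)))ᵀ * Φ3 (P1 t)
          - (Φ2 (P1 t))ᵀ * M * Φ2 (P1 t) + Γ2ᵀ * Q * Γ2)) i j) t) ∧
      -- Φ̇ₐ
      (HasDerivAt (fun s => Φa (P1 s) i j)
        ((ρ • Φa (P1 t) - (Φa (P1 t) * A + Gᵀ * Φ1 (P1 t)
          + (A0ᵀ - Φ10 (P0 t) * M0) * Φa (P1 t)
          + (Gᵀ - Φa (P1 t) * M) * (Φ2 (P1 t))ᵀ
          - Φa (P1 t) * M * Φ1 (P1 t) - Γ1ᵀ * Q)) i j) t) ∧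
      -- Φ̇_b
      (HasDerivAt (fun s => Φb (P1 s) i j)
        ((ρ • Φb (P1 t) - (Φa (P1 t) * F
          + Φ0 (P1 t) * (F0 - M0 * Φ20 (P0 t))
          + Φb (P1 t) * (A + F - M * (Φ1 (P1 t) + Φ2 (P1 t)))
          + Gᵀ * Φ2 (P1 t)
          + (A0ᵀ - Φ10 (P0 t) * M0) * Φb (P1 t)
          + (Gᵀ - Φa (P1 t) * M) * Φ3 (P1 t)
          - Φa (P1 t) * M * Φ2 (P1 t) + Γ1ᵀ * Q * Γ2)) i j) t)) ∧
     Φ10 (P0 T) = Q0f ∧ Φ20 (P0 T) = -(Q0f * Γ0f) ∧ Φ30 (P0 T) = Γ0fᵀ * Q0f * Γ0f ∧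
     Φ0 (P1 T) = Γ1fᵀ * Qf * Γ1f ∧ Φ1 (P1 T) = Qf ∧ Φ2 (P1 T) = -(Qf * Γ2f) ∧
     Φ3 (P1 T) = Γ2fᵀ * Qf * Γ2f ∧ Φa (P1 T) = -(Γ1fᵀ * Qf) ∧
     Φb (P1 T) = Γ1fᵀ * Qf * Γ2f) :=
  stmt_12_general T ρ A0 A F0 F G B0 B R0 R hR0 hR Q0 Q Q0f Qf Γ0 Γ1 Γ2 Γ0f Γ1f Γ2f P0 P1 hP0symm
    hP1symm hP0 hP0T hP1 hP1T
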